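/- arXiv:2306.07231 — 3 statements merged into one kernel-verified Lean document; each statement's English description precedes it below -/
import Mathlib

section
/- Every virtually solvable group G admits a finite normal series 1 = G₀ ⊴ G₁ ⊴ ... ⊴ Gₙ = G (each Gᵢ normal in G) such that each quotient G_{i+1}/G_i is either locally finite or abelian, and no two consecutive quotients are both locally finite. -/
/-- A group is locally finite if every finitely generated subgroup is finite. -/
def IsLocallyFiniteGroup (G : Type*) [Group G] : Prop :=
  ∀ S : Set G, S.Finite → (Subgroup.closure S : Set G).Finite

/-- The quotient `H/N` (for `N ≤ H` subgroups of an ambient group) is locally finite: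
every finite subset of `H` generates a subgroup meeting only finitely many cosets of `N`. -/
def QuotientIsLocallyFinite {G : Type*} [Group G] (N H : Subgroup G) : Prop :=
  ∀ S : Set G, S.Finite → S ⊆ (H : Set G) →
    ∃ T : Set G, T.Finite ∧ ∀ g ∈ Subgroup.closure S, ∃ t ∈ T, t⁻¹ * g ∈ N

/-- The quotient `H/N` is abelian: commutators of elements of `H` lie in `N`. -/
def QuotientIsAbelian {G : Type*} [Group G] (N H : Subgroup G) : Prop :=
  ∀ a ∈ H, ∀ b ∈ H, a * b * a⁻¹ * b⁻¹ ∈ N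

/-!
Let `N` be the normal core of a finite-index solvable subgroup. Pushing the derived series of `N`
into `G` gives normal subgroups `1 = N⁽ᵏ⁾ ≤ ⋯ ≤ N' ≤ N ≤ G` with abelian factors `N⁽ⁱ⁾/N⁽ⁱ⁺¹⁾`
and a finite top factor `G/N`.

Locally finite factors are closed under extensions `A ≤ B ≤ C`: if a finitely generated `P ≤ C`
meets only finitely many cosets of `B`, then `B ⊓ P` has finite index in `P`, hence is finitely
generated by Schreier's lemma and meets only finitely many cosets of `A`; so `P` does too. Hence
two consecutive locally finite factors can be merged into one, and a series of minimal
length has no such pair.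
-/

open Subgroup

theorem Set.finite_image_iff_exists_finite_cover {α β : Type*} {f : α → β} {s : Set α} :
    (f '' s).Finite ↔ ∃ T : Set α, T.Finite ∧ ∀ x ∈ s, ∃ t ∈ T, f t = f x := by
  constructor
  · intro h
    obtain ⟨T, -, hbij⟩ := Set.exists_subset_bijOn s f
    refine ⟨T, Set.Finite.of_finite_image (hbij.image_eq ▸ h) hbij.injOn, fun x hx => ?_⟩
    obtain ⟨t, ht, hft⟩ := hbij.surjOn (Set.mem_image_of_mem f hx)
    exact ⟨t, ht, hft⟩
  · rintro ⟨T, hT, hcover⟩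
    refine (hT.image f).subset ?_
    rintro _ ⟨x, hx, rfl⟩
    obtain ⟨t, ht, hft⟩ := hcover x hx
    exact ⟨t, ht, hft⟩

section

variable {G : Type*} [Group G]

theorem Subgroup.relIndex_ne_zero_iff_finite_image {N P : Subgroup G} :
    N.relIndex P ≠ 0 ↔ ((↑) '' (P : Set G) : Set (G ⧸ N)).Finite := by
  have hsmul (x : P) : x • ((1 : G) : G ⧸ N) = ((x : G) : G ⧸ N) := by
    change ((x : G) • ((1 : G) : G ⧸ N)) = _
    rw [MulAction.Quotient.smul_coe, smul_eq_mul, mul_one]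
  have hstab : N.subgroupOf P = MulAction.stabilizer P ((1 : G) : G ⧸ N) := by
    ext x
    rw [mem_subgroupOf, MulAction.mem_stabilizer_iff, hsmul, eq_comm, QuotientGroup.eq, inv_one,
      one_mul]
  have horbit : MulAction.orbit P ((1 : G) : G ⧸ N) = (↑) '' (P : Set G) := by
    ext
    simp [MulAction.mem_orbit_iff, hsmul]
  rw [relIndex, hstab, MulAction.index_stabilizer, horbit]
  exact ⟨Set.finite_of_ncard_ne_zero, fun h => Set.ncard_ne_zero_of_mem ⟨1, P.one_mem, rfl⟩ h⟩

theorem Subgroup.FG.inf_of_relIndex_ne_zero {H P : Subgroup G} (hP : P.FG)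
    (h : H.relIndex P ≠ 0) : (H ⊓ P).FG := by
  have : Group.FG P := (Group.fg_iff_subgroup_fg P).2 hP
  have : (H.subgroupOf P).FiniteIndex := ⟨h⟩
  rw [← subgroupOf_map_subtype, ← Group.fg_iff_subgroup_fg, ← range_subtype (H.subgroupOf P),
    ← MonoidHom.range_comp]
  infer_instance

theorem quotientIsLocallyFinite_iff {N H : Subgroup G} :
    QuotientIsLocallyFinite N H ↔
      ∀ S : Set G, S.Finite → S ⊆ H → N.relIndex (closure S) ≠ 0 := by
  simp only [QuotientIsLocallyFinite, relIndex_ne_zero_iff_finite_image,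
    Set.finite_image_iff_exists_finite_cover, QuotientGroup.eq, SetLike.mem_coe]

theorem QuotientIsLocallyFinite.trans {N H K : Subgroup G} (hNH : QuotientIsLocallyFinite N H)
    (hHK : QuotientIsLocallyFinite H K) : QuotientIsLocallyFinite N K := by
  rw [quotientIsLocallyFinite_iff] at hNH hHK ⊢
  intro S hS hSK
  have hHP : H.relIndex (closure S) ≠ 0 := hHK S hS hSK
  obtain ⟨S', hS'_closure, hS'⟩ := (Subgroup.fg_iff _).1
    (((Subgroup.fg_iff _).2 ⟨S, rfl, hS⟩).inf_of_relIndex_ne_zero hHP)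
  have hNHP : N.relIndex (H ⊓ closure S) ≠ 0 :=
    hS'_closure ▸ hNH S' hS' ((closure_le H).1 (hS'_closure.le.trans inf_le_left))
  have hNH_P : (N ⊓ H).relIndex (closure S) ≠ 0 :=
    relIndex_inf_mul_relIndex N H (closure S) ▸ mul_ne_zero hNHP hHP
  exact mt (relIndex_eq_zero_of_le_left inf_le_left) hNH_P

theorem quotientIsLocallyFinite_of_finiteIndex (N H : Subgroup G) [N.FiniteIndex] :
    QuotientIsLocallyFinite N H :=
  quotientIsLocallyFinite_iff.2 fun _ _ _ =>
    isFiniteRelIndex_iff_relIndex_ne_zero.1 isFiniteRelIndex_of_finiteIndex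

theorem quotientIsAbelian_commutator (H : Subgroup G) : QuotientIsAbelian ⁅H, H⁆ H :=
  fun _ ha _ hb => commutator_mem_commutator ha hb

def IsLocallyFiniteOrAbelianSeries (n : ℕ) (s : ℕ → Subgroup G) : Prop :=
  s 0 = ⊥ ∧ s n = ⊤ ∧ (∀ i, (s i).Normal) ∧ (∀ i, i < n → s i ≤ s (i + 1)) ∧
    ∀ i, i < n → QuotientIsLocallyFinite (s i) (s (i + 1)) ∨ QuotientIsAbelian (s i) (s (i + 1))

theorem IsLocallyFiniteOrAbelianSeries.mergeLocallyFinite {n : ℕ} {s : ℕ → Subgroup G}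
    (hs : IsLocallyFiniteOrAbelianSeries n s) {i : ℕ} (hi : i + 1 < n)
    (h₁ : QuotientIsLocallyFinite (s i) (s (i + 1)))
    (h₂ : QuotientIsLocallyFinite (s (i + 1)) (s (i + 2))) :
    IsLocallyFiniteOrAbelianSeries (n - 1) fun j => if j ≤ i then s j else s (j + 1) := by
  obtain ⟨h0, hn, hnormal, hmono, hquot⟩ := hs
  refine ⟨by simp [h0], ?_, fun j => ?_, fun j hj => ?_, fun j hj => ?_⟩
  · simp only [show ¬n - 1 ≤ i by omega, if_false, Nat.sub_add_cancel (by omega : 1 ≤ n), hn]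
  · dsimp only
    split_ifs <;> apply hnormal
  · rcases lt_trichotomy j i with hji | rfl | hij
    · simp only [if_pos hji.le, if_pos (show j + 1 ≤ i by omega)]
      exact hmono j (by omega)
    · simp only [le_refl, if_true, if_neg (show ¬j + 1 ≤ j by omega)]
      exact (hmono j (by omega)).trans (hmono (j + 1) hi)
    · simp only [if_neg (show ¬j ≤ i by omega), if_neg (show ¬j + 1 ≤ i by omega)]
      exact hmono (j + 1) (by omega)
  · rcases lt_trichotomy j i with hji | rfl | hij
    · simp only [if_pos hji.le, if_pos (show j + 1 ≤ i by omega)]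
      exact hquot j (by omega)
    · simp only [le_refl, if_true, if_neg (show ¬j + 1 ≤ j by omega)]
      exact Or.inl (h₁.trans h₂)
    · simp only [if_neg (show ¬j ≤ i by omega), if_neg (show ¬j + 1 ≤ i by omega)]
      exact hquot (j + 1) (by omega)

theorem exists_isLocallyFiniteOrAbelianSeries_of_finiteIndex (N : Subgroup G) [N.Normal]
    [N.FiniteIndex] [Group.IsSolvable N] :
    ∃ (n : ℕ) (s : ℕ → Subgroup G), IsLocallyFiniteOrAbelianSeries n s := by
  obtain ⟨k, hk⟩ := Group.IsSolvable.solvable (G := N)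
  set D : ℕ → Subgroup G := fun i => (derivedSeries N i).map N.subtype with hD
  have hD_zero : D 0 = N := by
    simp only [hD, derivedSeries_zero, ← MonoidHom.range_eq_map, range_subtype]
  have hD_succ (i : ℕ) : D (i + 1) = ⁅D i, D i⁆ := map_commutator _ _ _
  refine ⟨k + 1, fun i => if i ≤ k then D (k - i) else ⊤, by simp [hD, hk], by simp,
    fun i => ?_, fun i hi => ?_, fun i hi => ?_⟩
  · dsimp only
    split_ifs <;> infer_instance
  · rcases Nat.lt_or_ge i k with hik | hik
    · simp only [if_pos hik.le, if_pos (show i + 1 ≤ k by omega),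
        show k - i = k - (i + 1) + 1 by omega]
      exact map_mono (derivedSeries_antitone N (Nat.le_succ _))
    · simp only [if_neg (show ¬i + 1 ≤ k by omega)]
      exact le_top
  · rcases Nat.lt_or_ge i k with hik | hik
    · simp only [if_pos hik.le, if_pos (show i + 1 ≤ k by omega),
        show k - i = k - (i + 1) + 1 by omega, hD_succ]
      exact Or.inr (quotientIsAbelian_commutator _)
    · obtain rfl : i = k := by omega
      simp only [le_refl, if_true, Nat.sub_self, hD_zero]
      exact Or.inl (quotientIsLocallyFinite_of_finiteIndex _ _)

end

/-- Every virtually solvable group admits a finite normal series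
`1 = G₀ ⊴ G₁ ⊴ ... ⊴ Gₙ = G` (each `Gᵢ` normal in `G`) whose successive quotients are
locally finite or abelian, with no two consecutive quotients both locally finite. -/
theorem virtually_solvable_normal_series
    (G : Type*) [Group G]
    (hvs : ∃ H : Subgroup G, H.FiniteIndex ∧ IsSolvable H) :
    ∃ (n : ℕ) (s : ℕ → Subgroup G),
      s 0 = ⊥ ∧ s n = ⊤ ∧
      (∀ i, (s i).Normal) ∧
      (∀ i, i < n → s i ≤ s (i + 1)) ∧
      (∀ i, i < n →
        QuotientIsLocallyFinite (s i) (s (i + 1)) ∨ QuotientIsAbelian (s i) (s (i + 1))) ∧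
      (∀ i, i + 1 < n →
        ¬(QuotientIsLocallyFinite (s i) (s (i + 1)) ∧
          QuotientIsLocallyFinite (s (i + 1)) (s (i + 2)))) := by
  classical
  obtain ⟨H, hH, hsolv⟩ := hvs
  have : Group.IsSolvable H := hsolv
  have : Group.IsSolvable H.normalCore :=
    Group.isSolvable_of_isSolvable_injective (inclusion_injective H.normalCore_le)
  have hex := exists_isLocallyFiniteOrAbelianSeries_of_finiteIndex H.normalCore
  obtain ⟨s, hs⟩ := Nat.find_spec hex
  have ⟨h0, hn, hnormal, hmono, hquot⟩ := hs
  refine ⟨Nat.find hex, s, h0, hn, hnormal, hmono, hquot, fun i hi hLF => ?_⟩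
  exact Nat.find_min hex (by omega) ⟨_, hs.mergeLocallyFinite hi hLF.1 hLF.2⟩
end

section
/- Every group G has a unique maximal normal locally finite subgroup: the set of normal locally finite subgroups of G, ordered by inclusion, has a greatest element Λ(G). -/
section Aux

variable {G : Type*} [Group G]

/-- A subgroup-level version of local finiteness. -/
lemma isLocallyFiniteGroup_subgroup_iff (H : Subgroup G) :
    IsLocallyFiniteGroup H ↔
      ∀ S : Set G, S.Finite → S ⊆ H → (Subgroup.closure S : Set G).Finite := by
  constructor
  · intro h S hSfin hSH
    set T : Set H := Subtype.val ⁻¹' S with hT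
    have hTfin : T.Finite := hSfin.preimage Subtype.val_injective.injOn
    have hclT : (Subgroup.closure T : Set H).Finite := h T hTfin
    have himg : Subtype.val '' T = S :=
      Set.image_preimage_eq_of_subset (by simpa [Subtype.range_val] using hSH)
    have hmap : (Subgroup.closure T).map H.subtype = Subgroup.closure S := by
      rw [MonoidHom.map_closure]
      simp [Subgroup.coe_subtype, himg]
    have : (Subgroup.closure S : Set G) = Subtype.val '' (Subgroup.closure T : Set H) := by
      rw [← hmap]; rfl
    rw [this]
    exact hclT.image _
  · intro h S hSfin
    have hSfin' : (Subtype.val '' S : Set G).Finite := hSfin.image _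
    have hSub : (Subtype.val '' S : Set G) ⊆ H := by
      rintro x ⟨y, _, rfl⟩; exact y.2
    have hcl : (Subgroup.closure (Subtype.val '' S) : Set G).Finite := h _ hSfin' hSub
    have hmap : (Subgroup.closure S).map H.subtype = Subgroup.closure (Subtype.val '' S) := by
      rw [MonoidHom.map_closure]; rfl
    have himg : (Subtype.val '' (Subgroup.closure S : Set H) : Set G)
        = (Subgroup.closure (Subtype.val '' S) : Set G) := by
      rw [← hmap]; rfl
    exact Set.Finite.of_finite_image (himg ▸ hcl) Subtype.val_injective.injOn

/-- A finitely generated subgroup contained in a "locally finite" subgroup is finite. -/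
lemma closure_finite_of_le {H : Subgroup G}
    (hH : ∀ S : Set G, S.Finite → S ⊆ H → (Subgroup.closure S : Set G).Finite)
    {K : Subgroup G} (hfg : K.FG) (hle : K ≤ H) : (K : Set G).Finite := by
  obtain ⟨T, hT⟩ := hfg
  have := hH T T.finite_toSet (fun x hx => hle (hT ▸ Subgroup.subset_closure hx))
  rwa [hT] at this

/-- Key lemma (Schmidt-style): the join of two normal "locally finite" subgroups is
locally finite. -/
lemma sup_locallyFinite {H K : Subgroup G} (hHn : H.Normal) (_hKn : K.Normal)
    (hH : ∀ S : Set G, S.Finite → S ⊆ H → (Subgroup.closure S : Set G).Finite)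
    (hK : ∀ S : Set G, S.Finite → S ⊆ K → (Subgroup.closure S : Set G).Finite) :
    ∀ S : Set G, S.Finite → S ⊆ ↑(H ⊔ K) → (Subgroup.closure S : Set G).Finite := by
  intro S hSfin hS
  set π : G →* G ⧸ H := QuotientGroup.mk' H with hπ
  -- each element of π '' S is in π '' K
  have hmem : ∀ x ∈ S, ∃ k ∈ K, π k = π x := by
    intro x hx
    have hx' : x ∈ H ⊔ K := hS hx
    have : π x ∈ (H ⊔ K).map π := ⟨x, hx', rfl⟩
    rw [Subgroup.map_sup] at this
    have hHbot : H.map π = ⊥ := by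
      rw [eq_bot_iff]
      rintro y ⟨h, hh, rfl⟩
      simpa [π, QuotientGroup.eq_one_iff] using hh
    rw [hHbot, bot_sup_eq] at this
    obtain ⟨k, hk, hkx⟩ := this
    exact ⟨k, hk, hkx⟩
  choose! f hfK hfπ using hmem
  set T : Set G := f '' S with hTdef
  have hTfin : T.Finite := hSfin.image _
  have hTK : T ⊆ K := by rintro t ⟨x, hx, rfl⟩; exact hfK x hx
  have hclT : (Subgroup.closure T : Set G).Finite := hK T hTfin hTK
  have hπST : π '' S = π '' T := by
    ext y
    constructor
    · rintro ⟨x, hx, rfl⟩; exact ⟨f x, ⟨x, hx, rfl⟩, hfπ x hx⟩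
    · rintro ⟨t, ⟨x, hx, rfl⟩, rfl⟩; exact ⟨x, hx, (hfπ x hx).symm⟩
  -- the image of the closure of S in G ⧸ H is finite
  have hmapfin : ((Subgroup.closure S).map π : Set (G ⧸ H)).Finite := by
    rw [MonoidHom.map_closure, hπST, ← MonoidHom.map_closure]
    exact hclT.image _
  -- Now consider C := closure S, with the restriction of π
  set C := Subgroup.closure S with hC
  haveI : Finite S := hSfin
  haveI : Group.FG C := Group.closure_finite_fg S
  set φ : C →* G ⧸ H := π.comp C.subtype with hφ
  have hrange : (φ.range : Set (G ⧸ H)) = (C.map π : Set (G ⧸ H)) := by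
    ext y
    simp only [MonoidHom.coe_range, Set.mem_range, Subgroup.coe_map, Set.mem_image,
      SetLike.mem_coe]
    constructor
    · rintro ⟨c, rfl⟩; exact ⟨c, c.2, rfl⟩
    · rintro ⟨x, hx, rfl⟩; exact ⟨⟨x, hx⟩, rfl⟩
  haveI hrfin : Finite φ.range := by
    rw [Set.finite_coe_iff.symm] at *
    exact Set.finite_coe_iff.mpr (hrange ▸ hmapfin)
  haveI : φ.ker.FiniteIndex := Subgroup.finiteIndex_ker φ
  haveI : Group.FG φ.ker := Subgroup.fg_of_index_ne_zero φ.ker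
  -- φ.ker maps into H, hence is finite
  have hkerfg : (φ.ker.map C.subtype).FG := by
    classical
    obtain ⟨T, hT⟩ := (Group.fg_iff_subgroup_fg φ.ker).mp inferInstance
    exact ⟨T.image C.subtype, by rw [Finset.coe_image, ← MonoidHom.map_closure, hT]⟩
  have hkerle : φ.ker.map C.subtype ≤ H := by
    rintro x ⟨c, hc, rfl⟩
    have : π c = 1 := hc
    simpa [π, QuotientGroup.eq_one_iff] using this
  have hkerfin : ((φ.ker.map C.subtype : Subgroup G) : Set G).Finite :=
    closure_finite_of_le hH hkerfg hkerle
  haveI : Finite φ.ker := by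
    have : (Subtype.val '' (φ.ker : Set C) : Set G) = ((φ.ker.map C.subtype : Subgroup G) : Set G) := rfl
    have hfin : ((φ.ker : Set C)).Finite :=
      Set.Finite.of_finite_image (this ▸ hkerfin) Subtype.val_injective.injOn
    exact Set.finite_coe_iff.mp hfin
  haveI : Finite (C ⧸ φ.ker) := Finite.of_equiv _ (QuotientGroup.quotientKerEquivRange φ).symm.toEquiv
  haveI : Finite C := Finite.of_equiv _ (Subgroup.groupEquivQuotientProdSubgroup (s := φ.ker)).symm
  exact Set.finite_coe_iff.mp ‹Finite C›

end Aux

/-- Every group has a unique maximal (greatest) normal locally finite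
subgroup. -/
theorem exists_greatest_normal_locallyFinite_subgroup
    (G : Type*) [Group G] :
    ∃ Λ : Subgroup G, Λ.Normal ∧ IsLocallyFiniteGroup Λ ∧
      ∀ H : Subgroup G, H.Normal → IsLocallyFiniteGroup H → H ≤ Λ := by
  classical
  set 𝒮 : Set (Subgroup G) := {H | H.Normal ∧ IsLocallyFiniteGroup H} with h𝒮
  have hbot : (⊥ : Subgroup G) ∈ 𝒮 := by
    refine ⟨inferInstance, ?_⟩
    rw [isLocallyFiniteGroup_subgroup_iff]
    intro S hSfin hS
    have : S ⊆ {1} := by simpa [Subgroup.coe_bot] using hS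
    have hcl : Subgroup.closure S ≤ ⊥ := by
      rw [Subgroup.closure_le]; simpa using this
    have : (Subgroup.closure S : Set G) ⊆ {1} := by
      intro x hx; simpa using hcl hx
    exact Set.Finite.subset (Set.finite_singleton 1) this
  have hdir : DirectedOn (· ≤ ·) 𝒮 := by
    rintro H ⟨hHn, hHlf⟩ K ⟨hKn, hKlf⟩
    refine ⟨H ⊔ K, ⟨?_, ?_⟩, le_sup_left, le_sup_right⟩
    · exact Subgroup.sup_normal H K
    · rw [isLocallyFiniteGroup_subgroup_iff]
      exact sup_locallyFinite hHn hKn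
        ((isLocallyFiniteGroup_subgroup_iff H).mp hHlf)
        ((isLocallyFiniteGroup_subgroup_iff K).mp hKlf)
  refine ⟨sSup 𝒮, ?_, ?_, ?_⟩
  · constructor
    intro n hn g
    rw [Subgroup.mem_sSup_of_directedOn ⟨⊥, hbot⟩ hdir] at hn ⊢
    obtain ⟨H, hH, hnH⟩ := hn
    exact ⟨H, hH, hH.1.conj_mem n hnH g⟩
  · rw [isLocallyFiniteGroup_subgroup_iff]
    intro S hSfin hS
    -- S is contained in a single member of 𝒮
    have key : ∀ F : Finset G, ↑F ⊆ S → ∃ H ∈ 𝒮, (F : Set G) ⊆ ↑H := by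
      intro F
      induction F using Finset.induction_on with
      | empty => exact fun _ => ⟨⊥, hbot, by simp⟩
      | @insert a s _ ih =>
        intro hsub
        rw [Finset.coe_insert] at hsub ⊢
        obtain ⟨H, hH, hsH⟩ := ih ((Set.subset_insert a ↑s).trans hsub |>.trans (by rfl))
        have ha : a ∈ sSup 𝒮 := hS (hsub (Set.mem_insert a ↑s))
        rw [Subgroup.mem_sSup_of_directedOn ⟨⊥, hbot⟩ hdir] at ha
        obtain ⟨K, hK, haK⟩ := ha
        obtain ⟨L, hL, hHL, hKL⟩ := hdir H hH K hK
        exact ⟨L, hL, Set.insert_subset (hKL haK) (hsH.trans hHL)⟩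
    obtain ⟨H, hH, hSH⟩ := key hSfin.toFinset (by simp)
    rw [Set.Finite.coe_toFinset] at hSH
    exact (isLocallyFiniteGroup_subgroup_iff H).mp hH.2 S hSfin hSH
  · intro H hn hlf
    exact le_sSup ⟨hn, hlf⟩
end

section
/- Let G be a group that is the union of an increasing sequence of subgroups G₁ ≤ G₂ ≤ ..., each of which is strongly not (FS). Then G is strongly not (FS). Here a group H is strongly not (FS) if H is not periodic and for every element g ∈ H of infinite order, the distance in C*(H) from (g + g⁻¹)/2 to the set of self-adjoint elements with finite spectrum equals 1. -/
/-- Distance from `a` to the set of self-adjoint elements of finite spectrum. -/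
noncomputable def distToFiniteSpectrum {A : Type*} [NormedRing A] [StarRing A]
    [NormedAlgebra ℂ A] (a : A) : ℝ :=
  Metric.infDist a {v : A | IsSelfAdjoint v ∧ (spectrum ℂ v).Finite}

lemma auxGap (F : Set ℝ) (hF : F.Finite) {ε : ℝ} (hε : 0 < ε) :
    ∃ δ : ℝ, 0 < δ ∧ 4 * δ < ε ∧ ∀ x ∈ F, ∀ y ∈ F, x ≠ y → 2 * δ < |x - y| := by
  classical
  set T : Finset ℝ := ((hF.toFinset ×ˢ hF.toFinset).filter fun p => p.1 ≠ p.2).image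
      fun p => |p.1 - p.2| with hT
  have hTpos : ∀ d ∈ T, 0 < d := by
    intro d hd
    simp only [hT, Finset.mem_image, Finset.mem_filter, Finset.mem_product] at hd
    obtain ⟨p, ⟨-, hne⟩, rfl⟩ := hd
    exact abs_pos.mpr (sub_ne_zero.mpr hne)
  by_cases hTne : T.Nonempty
  · have hmin : 0 < T.min' hTne := hTpos _ (T.min'_mem hTne)
    refine ⟨min (ε/5) (T.min' hTne / 3), lt_min (by linarith) (by linarith), ?_, ?_⟩
    · have := min_le_left (ε/5) (T.min' hTne / 3); linarith
    · intro x hx y hy hxy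
      have hmem : |x - y| ∈ T := by
        simp only [hT, Finset.mem_image, Finset.mem_filter, Finset.mem_product]
        exact ⟨(x, y), ⟨⟨hF.mem_toFinset.mpr hx, hF.mem_toFinset.mpr hy⟩, hxy⟩, rfl⟩
      have h1 : T.min' hTne ≤ |x - y| := T.min'_le _ hmem
      have h2 := min_le_right (ε/5) (T.min' hTne / 3)
      linarith
  · refine ⟨ε/5, by linarith, by linarith, ?_⟩
    intro x hx y hy hxy
    exact absurd ⟨|x - y|, by
      simp only [hT, Finset.mem_image, Finset.mem_filter, Finset.mem_product]
      exact ⟨(x, y), ⟨⟨hF.mem_toFinset.mpr hx, hF.mem_toFinset.mpr hy⟩, hxy⟩, rfl⟩⟩ hTne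

lemma auxSpecPerturb {A : Type*} [NormedRing A] [StarRing A] [CStarRing A] [NormedAlgebra ℂ A]
    [StarModule ℂ A] [CompleteSpace A] [Nontrivial A]
    {v b : A} (hv : IsSelfAdjoint v) {δ : ℝ} (hδ : 0 < δ)
    (hvb : ‖b - v‖ < δ) : ∀ x ∈ spectrum ℝ b, ∃ l ∈ spectrum ℝ v, |x - l| < δ := by
  letI : CStarAlgebra A := { }
  intro x hx
  by_contra hcon
  push_neg at hcon
  have hcon' : ∀ t ∈ spectrum ℝ v, δ ≤ |x - t| := hcon
  have hne : ∀ t ∈ spectrum ℝ v, x - t ≠ 0 := by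
    intro t ht h0
    have := hcon' t ht
    rw [h0, abs_zero] at this
    linarith
  have hcont : ContinuousOn (fun t : ℝ => (x - t)⁻¹) (spectrum ℝ v) :=
    (continuousOn_const.sub continuousOn_id).inv₀ hne
  set r := cfc (fun t : ℝ => (x - t)⁻¹) v with hr
  have h1 : algebraMap ℝ A x - v = cfc (fun t : ℝ => x - t) v := by
    rw [cfc_sub (fun _ => x) (fun t => t) v, cfc_const x v, cfc_id' ℝ v]
  have key : ∀ (f g : ℝ → ℝ), (∀ t ∈ spectrum ℝ v, f t * g t = 1) →
      ContinuousOn f (spectrum ℝ v) → ContinuousOn g (spectrum ℝ v) →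
      cfc f v * cfc g v = 1 := by
    intro f g h hf hg
    rw [← cfc_mul f g v]
    calc cfc (fun t => f t * g t) v = cfc (fun _ : ℝ => (1:ℝ)) v := cfc_congr h
    _ = 1 := by rw [cfc_const (1:ℝ) v, map_one]
  have hmul1 : (algebraMap ℝ A x - v) * r = 1 := by
    rw [h1, hr]
    exact key _ _ (fun t ht => mul_inv_cancel₀ (hne t ht)) (by fun_prop) hcont
  have hmul2 : r * (algebraMap ℝ A x - v) = 1 := by
    rw [h1, hr]
    exact key _ _ (fun t ht => inv_mul_cancel₀ (hne t ht)) hcont (by fun_prop)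
  set e : Aˣ := ⟨algebraMap ℝ A x - v, r, hmul1, hmul2⟩ with he
  have hrnorm : ‖r‖ ≤ δ⁻¹ := by
    apply norm_cfc_le (by positivity)
    intro t ht
    rw [Real.norm_eq_abs, abs_inv]
    exact inv_anti₀ hδ (hcon' t ht)
  have hrpos : 0 < ‖r‖ := by
    rw [norm_pos_iff]
    intro h0
    rw [h0, zero_mul] at hmul2
    exact one_ne_zero hmul2.symm
  have hδr : δ ≤ ‖r‖⁻¹ := by
    rw [← inv_inv δ]
    exact inv_anti₀ hrpos hrnorm
  have hnear : ‖(algebraMap ℝ A x - b) - ↑e‖ < ‖(↑e⁻¹ : A)‖⁻¹ := by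
    have heq : (algebraMap ℝ A x - b) - (algebraMap ℝ A x - v) = v - b := by abel
    show ‖(algebraMap ℝ A x - b) - (algebraMap ℝ A x - v)‖ < ‖r‖⁻¹
    rw [heq, norm_sub_rev]
    linarith
  have hunit : IsUnit (algebraMap ℝ A x - b) := (e.ofNearby _ hnear).isUnit
  exact spectrum.mem_iff.mp hx hunit

lemma auxApprox {A : Type*} [NormedRing A] [StarRing A] [CStarRing A] [NormedAlgebra ℂ A]
    [StarModule ℂ A] [CompleteSpace A] [Nontrivial A]
    (Bn : ℕ → StarSubalgebra ℂ A)
    (hBclosed : ∀ n, IsClosed (Bn n : Set A))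
    (hBdense : Dense (⋃ n, (Bn n : Set A)))
    {v : A} (hv : IsSelfAdjoint v) (hfin : (spectrum ℂ v).Finite)
    {ε : ℝ} (hε : 0 < ε) :
    ∃ k, ∃ w ∈ Bn k, IsSelfAdjoint w ∧ (spectrum ℂ w).Finite ∧ ‖v - w‖ < ε := by
  classical
  letI : CStarAlgebra A := { }
  set F : Set ℝ := spectrum ℝ v with hF
  have hFfin : F.Finite := by
    have : F = algebraMap ℝ ℂ ⁻¹' spectrum ℂ v := (spectrum.preimage_algebraMap ℂ).symm
    rw [this]
    exact hfin.preimage (fun x _ y _ h => by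
      simpa using congrArg Complex.re h)
  obtain ⟨δ, hδ, hδε, hgap⟩ := auxGap F hFfin hε
  -- find an approximating element of the union
  obtain ⟨b₀, hb₀mem, hb₀dist⟩ := Metric.mem_closure_iff.mp (hBdense v) (δ/2) (by linarith)
  obtain ⟨k, hb₀k⟩ := Set.mem_iUnion.mp hb₀mem
  set b : A := (2:ℂ)⁻¹ • (b₀ + star b₀) with hbdef
  have hbmem : b ∈ Bn k := SMulMemClass.smul_mem _ (add_mem hb₀k (star_mem hb₀k))
  have hbsa : IsSelfAdjoint b := by
    rw [IsSelfAdjoint, hbdef, star_smul, star_add, star_star]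
    rw [show star ((2:ℂ)⁻¹) = (2:ℂ)⁻¹ by simp]
    rw [add_comm]
  have hvb : ‖b - v‖ < δ/2 := by
    have h2 : (2:ℂ)⁻¹ • (v + v) = v := by
      rw [← two_smul ℂ v, smul_smul]
      norm_num
    have heq : b - v = (2:ℂ)⁻¹ • ((b₀ - v) + (star b₀ - v)) := by
      conv_lhs => rw [hbdef, ← h2, ← smul_sub]
      congr 1
      abel
    rw [heq]
    have hstar : ‖star b₀ - v‖ = ‖b₀ - v‖ := by
      rw [show star b₀ - v = star (b₀ - v) by rw [star_sub, hv.star_eq], norm_star]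
    have hb₀v : ‖b₀ - v‖ < δ/2 := by
      rw [← dist_eq_norm, dist_comm]
      exact hb₀dist
    calc ‖(2:ℂ)⁻¹ • ((b₀ - v) + (star b₀ - v))‖
        = ‖(2:ℂ)⁻¹‖ * ‖(b₀ - v) + (star b₀ - v)‖ := norm_smul _ _
      _ ≤ ‖(2:ℂ)⁻¹‖ * (‖b₀ - v‖ + ‖star b₀ - v‖) := by
          gcongr
          exact norm_add_le _ _
      _ = 2⁻¹ * (‖b₀ - v‖ + ‖b₀ - v‖) := by
          rw [hstar]
          norm_num
      _ < δ/2 := by linarith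
  have hspecb : ∀ x ∈ spectrum ℝ b, ∃ l ∈ F, |x - l| < δ :=
    auxSpecPerturb hv hδ (by linarith)
  -- the retraction onto the finite set F
  set f : ℝ → ℝ := fun x => if h : ∃ l ∈ F, |x - l| < δ then h.choose else 0 with hfdef
  have hfspec : ∀ x, (∃ l ∈ F, |x - l| < δ) → f x ∈ F ∧ |x - f x| < δ := by
    intro x hx
    rw [hfdef]
    simp only [dif_pos hx]
    exact ⟨hx.choose_spec.1, hx.choose_spec.2⟩
  have huniq : ∀ x, ∀ l ∈ F, |x - l| < δ → f x = l := by
    intro x l hl hxl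
    obtain ⟨hfF, hfx⟩ := hfspec x ⟨l, hl, hxl⟩
    by_contra hne
    have := hgap _ hfF _ hl hne
    have htri : |f x - l| ≤ |x - f x| + |x - l| := by
      have := abs_sub_abs_le_abs_sub (x - l) (x - f x)
      calc |f x - l| = |(x - l) - (x - f x)| := by ring_nf
        _ ≤ |x - l| + |x - f x| := abs_sub _ _
        _ = |x - f x| + |x - l| := by ring
    linarith
  have hcontOn : ContinuousOn f (spectrum ℝ b) := by
    intro x hx
    obtain ⟨l, hlF, hxl⟩ := hspecb x hx
    have hev : (fun _ : ℝ => l) =ᶠ[nhds x] f := by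
      refine Filter.eventuallyEq_of_mem (Metric.ball_mem_nhds x (show (0:ℝ) < δ - |x - l| by linarith)) ?_
      intro y hy
      rw [Metric.mem_ball, Real.dist_eq] at hy
      have : |y - l| < δ := by
        calc |y - l| ≤ |y - x| + |x - l| := abs_sub_le _ _ _
          _ < δ := by linarith
      exact (huniq y l hlF this).symm
    exact (continuousAt_const.congr hev).continuousWithinAt
  -- now pass to the subalgebra
  haveI : IsClosed ((Bn k : Set A)) := hBclosed k
  set b' : Bn k := ⟨b, hbmem⟩ with hb'def
  have hb'sa : IsSelfAdjoint b' := Subtype.ext hbsa.star_eq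
  have hspec' : spectrum ℝ b' = spectrum ℝ b := by
    rw [← spectrum.preimage_algebraMap (R := ℝ) ℂ, ← spectrum.preimage_algebraMap (R := ℝ) ℂ,
      StarSubalgebra.spectrum_eq]
  set w : A := cfc f b with hwdef
  have hwsa : IsSelfAdjoint w := cfc_predicate f b
  have hwmem : w ∈ Bn k := by
    have hcoe : ((Bn k).subtype (cfc f b') : A) = cfc f b := by
      rw [StarAlgHom.map_cfc (S := ℂ) ((Bn k).subtype) f b'
        (by rw [hspec']; exact hcontOn) (by exact continuous_subtype_val)]
      rfl
    rw [hwdef, ← hcoe]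
    exact (cfc f b').2
  have hbw : ‖b - w‖ ≤ δ := by
    have heq : b - w = cfc (fun x : ℝ => x - f x) b := by
      rw [hwdef, cfc_sub (fun x : ℝ => x) f b (by fun_prop) hcontOn, cfc_id' ℝ b]
    rw [heq]
    apply norm_cfc_le hδ.le
    intro x hx
    rw [Real.norm_eq_abs]
    exact (hfspec x (hspecb x hx)).2.le
  have hwfin : (spectrum ℂ w).Finite := by
    have h1 : spectrum ℂ w = algebraMap ℝ ℂ '' spectrum ℝ w :=
      hwsa.spectrumRestricts.algebraMap_image.symm
    have h2 : spectrum ℝ w = f '' spectrum ℝ b := cfc_map_spectrum f b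
    have h3 : f '' spectrum ℝ b ⊆ F ∪ {0} := by
      rintro - ⟨x, hx, rfl⟩
      exact Set.mem_union_left _ (hfspec x (hspecb x hx)).1
    rw [h1, h2]
    exact (((hFfin.union (Set.finite_singleton 0)).subset h3).image _)
  refine ⟨k, w, hwmem, hwsa, hwfin, ?_⟩
  calc ‖v - w‖ ≤ ‖v - b‖ + ‖b - w‖ := norm_sub_le_norm_sub_add_norm_sub v b w
    _ < δ/2 + δ := by rw [norm_sub_rev]; linarith
    _ < ε := by linarith

/-- If `G` is the union of an increasing sequence of subgroups `G_n`, each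
strongly not (FS), then `G` is strongly not (FS). Here `C*(G)` is presented as a
C*-algebra `A` with a unitary representation `u` of `G`, realized as the closure of the
increasing union of the C*-subalgebras `B n` corresponding to `C*(G_n)` (the inclusions
`C*(G_n) → C*(G)` being isometric); strongly not (FS) for `G_n` says `G_n` is not
periodic and for every `g ∈ G_n` of infinite order the distance of `(u g + u g⁻¹)/2` to
the self-adjoint elements of finite spectrum in `C*(G_n)` is `1`. -/
theorem strongly_not_FS_of_increasing_union
    {G : Type*} [Group G]
    {A : Type*} [NormedRing A] [StarRing A] [CStarRing A] [NormedAlgebra ℂ A]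
    [StarModule ℂ A] [CompleteSpace A]
    (Gn : ℕ → Subgroup G) (hGmono : Monotone Gn) (hGunion : ∀ g : G, ∃ n, g ∈ Gn n)
    (Bn : ℕ → StarSubalgebra ℂ A) (hBmono : Monotone Bn)
    (hBclosed : ∀ n, IsClosed (Bn n : Set A))
    (hBdense : Dense (⋃ n, (Bn n : Set A)))
    (u : G →* unitary A)
    (hustar : ∀ g : G, ((u g⁻¹ : A)) = star (u g : A))
    (humem : ∀ n, ∀ g ∈ Gn n, (u g : A) ∈ Bn n)
    (hnotper : ∀ n, ∃ g ∈ Gn n, ¬ IsOfFinOrder g)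
    (hFS : ∀ n, ∀ g ∈ Gn n, ¬ IsOfFinOrder g →
      Metric.infDist ((2 : ℂ)⁻¹ • ((u g : A) + (u g⁻¹ : A)))
        {v : A | v ∈ Bn n ∧ IsSelfAdjoint v ∧ (spectrum ℂ v).Finite} = 1) :
    (∃ g : G, ¬ IsOfFinOrder g) ∧
    ∀ g : G, ¬ IsOfFinOrder g →
      distToFiniteSpectrum ((2 : ℂ)⁻¹ • ((u g : A) + (u g⁻¹ : A))) = 1 := by
  obtain ⟨g₀, hg₀mem, hg₀⟩ := hnotper 0
  refine ⟨⟨g₀, hg₀⟩, ?_⟩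
  intro g hg
  obtain ⟨n, hn⟩ := hGunion g
  set a : A := (2 : ℂ)⁻¹ • ((u g : A) + (u g⁻¹ : A)) with ha
  -- A is nontrivial
  rcases subsingleton_or_nontrivial A with hsub | hnontriv
  · -- in a subsingleton algebra, the hypothesis hFS is contradictory
    exfalso
    have h1 := hFS n g hn hg
    have hmem : a ∈ {v : A | v ∈ Bn n ∧ IsSelfAdjoint v ∧ (spectrum ℂ v).Finite} := by
      refine ⟨by rw [Subsingleton.elim a ((u g : A))]; exact humem n g hn, ?_, ?_⟩
      · rw [IsSelfAdjoint, Subsingleton.elim (star a) a]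
      · have : spectrum ℂ a = ∅ := by
          rw [Set.eq_empty_iff_forall_notMem]
          intro z hz
          exact spectrum.mem_iff.mp hz (isUnit_of_subsingleton _)
        rw [this]; exact Set.finite_empty
    have := Metric.infDist_le_dist_of_mem (x := a) hmem
    rw [h1, dist_self] at this
    linarith
  -- main case
  set S : Set A := {v : A | IsSelfAdjoint v ∧ (spectrum ℂ v).Finite} with hS
  have hzeroS : ∀ m, (0 : A) ∈ {v : A | v ∈ Bn m ∧ IsSelfAdjoint v ∧ (spectrum ℂ v).Finite} := by
    intro m
    refine ⟨zero_mem _, IsSelfAdjoint.zero A, ?_⟩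
    rw [spectrum.zero_eq]
    exact Set.finite_singleton 0
  rw [distToFiniteSpectrum, ← hS]
  refine le_antisymm ?_ ?_
  · -- upper bound
    have hsubset : {v : A | v ∈ Bn n ∧ IsSelfAdjoint v ∧ (spectrum ℂ v).Finite} ⊆ S :=
      fun v hv => ⟨hv.2.1, hv.2.2⟩
    have := Metric.infDist_le_infDist_of_subset (x := a) hsubset ⟨0, hzeroS n⟩
    rw [hFS n g hn hg] at this
    exact this
  · -- lower bound
    by_contra hlt
    push_neg at hlt
    have hSne : S.Nonempty := ⟨0, (IsSelfAdjoint.zero A),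
      by rw [spectrum.zero_eq]; exact Set.finite_singleton 0⟩
    obtain ⟨v, hvS, hvdist⟩ := (Metric.infDist_lt_iff hSne).mp hlt
    have : (1:ℝ) ≤ dist a v := by
      refine le_of_forall_pos_le_add ?_
      intro ε hε
      obtain ⟨k, w, hwmem, hwsa, hwfin, hwv⟩ := auxApprox Bn hBclosed hBdense hvS.1 hvS.2 hε
      set m := max n k with hm
      have hgm : g ∈ Gn m := hGmono (le_max_left n k) hn
      have hwm : w ∈ Bn m := hBmono (le_max_right n k) hwmem
      have h1 := hFS m g hgm hg
      have h2 : (1:ℝ) ≤ dist a w := by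
        rw [← h1]
        exact Metric.infDist_le_dist_of_mem ⟨hwm, hwsa, hwfin⟩
      calc (1:ℝ) ≤ dist a w := h2
        _ ≤ dist a v + dist v w := dist_triangle a v w
        _ ≤ dist a v + ε := by
            gcongr
            rw [dist_eq_norm]
            exact hwv.le
    linarith
end
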